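/- arXiv:2207.04990 — 4 statements merged into one kernel-verified Lean document; each statement's English description precedes it below -/
import Mathlib

section
/- The game LCTR is conjugate-invariant: for every partition λ, SG(λ') = SG(λ), where λ' denotes the conjugate partition. -/
/-- Remove the left column of a Young diagram: subtract 1 from each part and
omit nonpositive values. -/
def leftCol (l : List ℕ) : List ℕ := (l.map (· - 1)).filter (0 < ·)

/-- Remove the top row of a Young diagram. -/
def topRow (l : List ℕ) : List ℕ := l.tail

/-- Minimum excluded value of a set of naturals. -/
noncomputable def mex (s : Set ℕ) : ℕ := sInf {n | n ∉ s}

def wt (l : List ℕ) : ℕ := l.sum + l.length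

lemma wt_leftCol_le (l : List ℕ) : wt (leftCol l) ≤ l.sum := by
  induction l with
  | nil => simp [leftCol, wt]
  | cons a t ih =>
    simp only [leftCol, wt] at ih ⊢
    rw [List.map_cons, List.filter_cons]
    by_cases h : 0 < a - 1
    · simp only [h, decide_true, if_true, List.sum_cons, List.length_cons]
      omega
    · simp only [h, decide_false, Bool.false_eq_true, if_false, List.sum_cons]
      omega

lemma wt_leftCol_lt (l : List ℕ) (h : l ≠ []) : wt (leftCol l) < wt l := by
  have h1 := wt_leftCol_le l
  have h2 : 0 < l.length := List.length_pos_iff.mpr h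
  unfold wt at *
  omega

lemma wt_topRow_lt (l : List ℕ) (h : l ≠ []) : wt (topRow l) < wt l := by
  cases l with
  | nil => exact absurd rfl h
  | cons a t => simp [topRow, wt]; omega

/-- The Sprague–Grundy value of a position in the LCTR game. -/
noncomputable def SG (l : List ℕ) : ℕ :=
  if h : l = [] then 0
  else mex {SG (leftCol l), SG (topRow l)}
termination_by wt l
decreasing_by
  · exact wt_leftCol_lt l h
  · exact wt_topRow_lt l h

/-- A partition: a non-increasing list of positive integers. -/
def IsPartition (l : List ℕ) : Prop := l.Pairwise (· ≥ ·) ∧ ∀ x ∈ l, 0 < x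

/-- The conjugate partition: the `j`-th part (for `1 ≤ j ≤ l₁`) is the number
of parts of `l` that are at least `j`. -/
def conj (l : List ℕ) : List ℕ :=
  (List.range (l.headD 0)).map (fun j => l.countP (fun x => decide (j < x)))

/-! Conjugation exchanges the two moves of LCTR: removing the top row of `λ'` is the conjugate of
removing the left column of `λ`, and removing the left column of `λ'` is the conjugate of removing
the top row of `λ`. Hence, by induction on the size of `λ`,
`SG λ' = mex {SG (T λ)', SG (L λ)'} = mex {SG (T λ), SG (L λ)} = SG λ`. -/

theorem List.range_filter_lt {a b : ℕ} (h : b ≤ a) :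
    (List.range a).filter (· < b) = List.range b := by
  obtain ⟨c, rfl⟩ := Nat.exists_eq_add_of_le h
  simp [List.range_add, List.filter_append, List.filter_eq_self.mpr, List.filter_eq_nil_iff.mpr]

theorem SG_of_ne_nil {l : List ℕ} (h : l ≠ []) :
    SG l = mex {SG (leftCol l), SG (topRow l)} := by
  rw [SG, dif_neg h]

theorem length_conj (l : List ℕ) : (conj l).length = l.headD 0 := by
  simp [conj]

theorem countP_leftCol (l : List ℕ) (j : ℕ) :
    (leftCol l).countP (j < ·) = l.countP (j + 1 < ·) := by
  rw [leftCol, List.countP_filter, List.countP_map]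
  refine List.countP_congr fun x _ => ?_
  simp only [Function.comp_apply, Bool.and_eq_true, decide_eq_true_eq]
  omega

theorem List.Pairwise.le_headD {l : List ℕ} (hl : l.Pairwise (· ≥ ·)) {x : ℕ} (hx : x ∈ l) :
    x ≤ l.headD 0 := by
  cases l with
  | nil => simp at hx
  | cons a t =>
    rcases List.mem_cons.mp hx with rfl | hx
    · simp
    · exact List.rel_of_pairwise_cons hl hx

theorem headD_leftCol {l : List ℕ} (hl : l.Pairwise (· ≥ ·)) :
    (leftCol l).headD 0 = l.headD 0 - 1 := by
  cases l with
  | nil => rfl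
  | cons a t =>
    by_cases ha : 0 < a - 1
    · simp [leftCol, ha]
    · have hnil : (t.map (· - 1)).filter (0 < ·) = [] := by
        simp only [List.filter_eq_nil_iff, List.mem_map]
        rintro _ ⟨x, hx, rfl⟩
        have := List.rel_of_pairwise_cons hl hx
        simp only [decide_eq_true_eq]
        omega
      simp [leftCol, ha, hnil]
      omega

theorem countP_lt_pos_iff {l : List ℕ} (hl : l.Pairwise (· ≥ ·)) (j : ℕ) :
    0 < l.countP (j < ·) ↔ j < l.headD 0 := by
  rw [List.countP_pos_iff]
  constructor
  · rintro ⟨x, hx, hjx⟩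
    exact lt_of_lt_of_le (of_decide_eq_true hjx) (hl.le_headD hx)
  · cases l with
    | nil => simp
    | cons a t => exact fun hj => ⟨a, List.mem_cons_self, decide_eq_true hj⟩

theorem topRow_conj {l : List ℕ} (hl : l.Pairwise (· ≥ ·)) :
    topRow (conj l) = conj (leftCol l) := by
  rw [topRow, conj, conj, headD_leftCol hl]
  cases h : l.headD 0 with
  | zero => rfl
  | succ b =>
    rw [List.range_succ_eq_map, List.map_cons, List.tail_cons, List.map_map]
    exact List.map_congr_left fun j _ => (countP_leftCol l j).symm

theorem leftCol_conj {l : List ℕ} (hl : l.Pairwise (· ≥ ·)) :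
    leftCol (conj l) = conj (topRow l) := by
  cases l with
  | nil => rfl
  | cons a t =>
    have ht := hl.of_cons
    have hb : t.headD 0 ≤ a := by
      cases t with
      | nil => exact Nat.zero_le a
      | cons b _ => exact List.rel_of_pairwise_cons hl List.mem_cons_self
    have hcount : ∀ j < a, (a :: t).countP (j < ·) - 1 = t.countP (j < ·) := by
      intro j hj
      simp [hj]
    rw [leftCol, conj, conj, topRow, List.tail_cons, List.headD_cons, List.map_map,
      List.filter_map]
    rw [List.filter_congr (q := (· < t.headD 0)), List.range_filter_lt hb]
    · refine List.map_congr_left fun j hj => ?_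
      exact hcount j (lt_of_lt_of_le (List.mem_range.mp hj) hb)
    · intro j hj
      simp only [Function.comp_apply, decide_eq_decide]
      rw [hcount j (List.mem_range.mp hj)]
      exact countP_lt_pos_iff ht j

theorem IsPartition.topRow {l : List ℕ} (hl : IsPartition l) : IsPartition (topRow l) := by
  cases l with
  | nil => exact hl
  | cons a t => exact ⟨hl.1.of_cons, fun x hx => hl.2 x (List.mem_cons_of_mem a hx)⟩

theorem IsPartition.leftCol {l : List ℕ} (hl : IsPartition l) : IsPartition (leftCol l) :=
  ⟨(hl.1.map (S := (· ≥ ·)) (· - 1) fun _ _ h => Nat.sub_le_sub_right h 1).filter _,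
    fun x hx => by simpa using List.of_mem_filter (p := fun x => decide (0 < x)) hx⟩

theorem IsPartition.conj_ne_nil {l : List ℕ} (hl : IsPartition l) (h : l ≠ []) :
    conj l ≠ [] := by
  obtain ⟨a, t, rfl⟩ := List.exists_cons_of_ne_nil h
  rw [← List.length_pos_iff, length_conj]
  exact hl.2 a List.mem_cons_self

/-- LCTR is conjugate-invariant: conjugate partitions have the same
Sprague–Grundy value. -/
theorem SG_conj (l : List ℕ) (hl : IsPartition l) : SG (conj l) = SG l := by
  induction h : wt l using Nat.strong_induction_on generalizing l with
  | _ n ih =>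
    subst h
    by_cases hne : l = []
    · subst hne; rfl
    rw [SG_of_ne_nil hne, SG_of_ne_nil (hl.conj_ne_nil hne), topRow_conj hl.1, leftCol_conj hl.1,
      ih _ (wt_leftCol_lt l hne) _ hl.leftCol rfl, ih _ (wt_topRow_lt l hne) _ hl.topRow rfl,
      Set.pair_comm]
end

section
/- Every quadrated partition λ is a P-position in LCTR; that is, SG(λ) = 0. -/
/-- A quadrated partition: all parts are even and each part occurs an even
number of times. -/
def Quadrated (l : List ℕ) : Prop :=
  IsPartition l ∧ (∀ x ∈ l, Even x) ∧ (∀ x : ℕ, Even (l.count x))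

/-!
The second player wins by repeating the opponent's move. From a nonempty quadrated partition
both moves are available, since its largest part is at least 2 and occurs at least twice.
Removing the left column twice subtracts 2 from every part and keeps the result quadrated.
Removing the top row twice removes two equal rows, so the result is again quadrated.
-/

lemma mex_eq_zero_iff {s : Set ℕ} (hs : s.Finite) : mex s = 0 ↔ 0 ∉ s := by
  rw [mex, Nat.sInf_eq_zero, ← Set.compl_def, Set.mem_compl_iff,
    or_iff_left hs.infinite_compl.nonempty.ne_empty]

lemma SG_nil : SG [] = 0 := by
  rw [SG, dif_pos rfl]

lemma SG_eq_zero_iff {l : List ℕ} (hl : l ≠ []) :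
    SG l = 0 ↔ SG (leftCol l) ≠ 0 ∧ SG (topRow l) ≠ 0 := by
  rw [SG, dif_neg hl, mex_eq_zero_iff (Set.toFinite _)]
  simp only [Set.mem_insert_iff, Set.mem_singleton_iff, not_or, ne_comm]

lemma leftCol_leftCol (l : List ℕ) :
    leftCol (leftCol l) = (l.map (· - 2)).filter (0 < ·) := by
  induction l with
  | nil => rfl
  | cons a t ih =>
    simp only [leftCol] at ih ⊢
    obtain _ | _ | _ | a := a <;> simp [ih]

lemma count_filter_map_tsub {k y : ℕ} (hy : 0 < y) (l : List ℕ) :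
    ((l.map (· - k)).filter (0 < ·)).count y = l.count (y + k) := by
  rw [List.count_filter (by simpa using hy), List.count_eq_countP, List.countP_map,
    List.count_eq_countP]
  exact List.countP_congr fun x _ => by simp; omega

theorem SG_eq_zero_of_closed (P : List ℕ → Prop)
    (hL : ∀ l, P l → l ≠ [] → leftCol l ≠ [] ∧ P (leftCol (leftCol l)))
    (hT : ∀ l, P l → l ≠ [] → topRow l ≠ [] ∧ P (topRow (topRow l)))
    (l : List ℕ) (hl : P l) : SG l = 0 := by
  by_cases hne : l = []
  · rw [hne, SG_nil]
  obtain ⟨hL₀, hLL⟩ := hL l hl hne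
  obtain ⟨hT₀, hTT⟩ := hT l hl hne
  have hLL₀ := SG_eq_zero_of_closed P hL hT _ hLL
  have hTT₀ := SG_eq_zero_of_closed P hL hT _ hTT
  rw [SG_eq_zero_iff hne]
  exact ⟨fun h ↦ ((SG_eq_zero_iff hL₀).1 h).1 hLL₀, fun h ↦ ((SG_eq_zero_iff hT₀).1 h).2 hTT₀⟩
termination_by wt l
decreasing_by
  · exact (wt_leftCol_lt _ hL₀).trans (wt_leftCol_lt l hne)
  · exact (wt_topRow_lt _ hT₀).trans (wt_topRow_lt l hne)

namespace Quadrated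

variable {a b : ℕ} {l t : List ℕ}

lemma nil : Quadrated [] :=
  ⟨⟨List.Pairwise.nil, by simp⟩, by simp, by simp⟩

lemma head_eq (hl : Quadrated (a :: b :: t)) : a = b := by
  by_contra hab
  have hba : b < a := lt_of_le_of_ne (List.rel_of_pairwise_cons hl.1.1 List.mem_cons_self)
    (Ne.symm hab)
  have ha : a ∉ t := fun ha ↦ by
    have := List.rel_of_pairwise_cons hl.1.1.of_cons ha
    omega
  have := hl.2.2 a
  simp [Ne.symm hab, List.count_eq_zero_of_not_mem ha] at this

lemma of_cons_cons (hl : Quadrated (a :: a :: t)) : Quadrated t := by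
  obtain ⟨⟨hsort, hpos⟩, heven, hcount⟩ := hl
  refine ⟨⟨hsort.of_cons.of_cons, fun x hx ↦ hpos x (by simp [hx])⟩,
    fun x hx ↦ heven x (by simp [hx]), fun x ↦ ?_⟩
  have := hcount x
  by_cases hx : a = x <;> simp_all [List.count_cons, Nat.even_add_one]

lemma topRow_ne_nil (hl : Quadrated l) (hne : l ≠ []) : topRow l ≠ [] := by
  obtain _ | ⟨a, _ | ⟨b, t⟩⟩ := l
  · contradiction
  · have := hl.2.2 a
    simp at this
  · simp [topRow]

lemma topRow_topRow (hl : Quadrated l) : Quadrated (topRow (topRow l)) := by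
  obtain _ | ⟨a, _ | ⟨b, t⟩⟩ := l
  · exact nil
  · exact nil
  · obtain rfl := hl.head_eq
    exact hl.of_cons_cons

lemma leftCol_ne_nil (hl : Quadrated l) (hne : l ≠ []) : leftCol l ≠ [] := by
  obtain _ | ⟨a, t⟩ := l
  · contradiction
  · obtain ⟨k, rfl⟩ := hl.2.1 a List.mem_cons_self
    have := hl.1.2 _ List.mem_cons_self
    simp only [leftCol, List.map_cons, List.filter_cons, decide_eq_true_eq]
    rw [if_pos (by omega)]
    exact List.cons_ne_nil _ _

lemma leftCol_leftCol (hl : Quadrated l) : Quadrated (leftCol (leftCol l)) := by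
  obtain ⟨⟨hsort, -⟩, heven, hcount⟩ := hl
  rw [_root_.leftCol_leftCol]
  refine ⟨⟨(hsort.map (· - 2) fun a b (h : a ≥ b) ↦ Nat.sub_le_sub_right h 2).filter _,
    fun x hx ↦ by simpa using (List.mem_filter.1 hx).2⟩, fun x hx ↦ ?_, fun x ↦ ?_⟩
  · obtain ⟨y, hy, rfl⟩ := List.mem_map.1 (List.mem_filter.1 hx).1
    exact (heven y hy).tsub even_two
  · rcases x.eq_zero_or_pos with rfl | hx
    · rw [List.count_eq_zero.2 fun h ↦ by simpa using (List.mem_filter.1 h).2]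
      exact Even.zero
    · rw [count_filter_map_tsub hx]
      exact hcount _

end Quadrated

/-- Every quadrated partition is a P-position in LCTR. -/
theorem SG_quadrated (l : List ℕ) (hl : Quadrated l) : SG l = 0 :=
  SG_eq_zero_of_closed Quadrated
    (fun _ hl hne ↦ ⟨hl.leftCol_ne_nil hne, hl.leftCol_leftCol⟩)
    (fun _ hl hne ↦ ⟨hl.topRow_ne_nil hne, hl.topRow_topRow⟩) l hl
end

section
/- For every positive integer n, the staircase partition s_n = (n, n−1, …, 2, 1) satisfies SG(s_n) = 1 if n is odd and SG(s_n) = 0 if n is even in LCTR. -/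
/-- The staircase partition `(n, n-1, ..., 2, 1)`. -/
def staircase (n : ℕ) : List ℕ := (List.range n).map (fun i => n - i)

lemma staircase_succ (n : ℕ) : staircase (n + 1) = (n + 1) :: staircase n := by
  simp [staircase, List.range_succ_eq_map, List.map_map, Function.comp_def]

lemma leftCol_cons_add_two (a : ℕ) (l : List ℕ) :
    leftCol ((a + 2) :: l) = (a + 1) :: leftCol l := by
  simp [leftCol]

lemma leftCol_staircase_succ (n : ℕ) : leftCol (staircase (n + 1)) = staircase n := by
  induction n with
  | zero => rfl
  | succ m ih => rw [staircase_succ, leftCol_cons_add_two, ih, staircase_succ]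

lemma topRow_staircase_succ (n : ℕ) : topRow (staircase (n + 1)) = staircase n := by
  rw [staircase_succ, topRow, List.tail_cons]

lemma mex_singleton_zero : mex {0} = 1 := by
  have h1 : mex {0} ≤ 1 := Nat.sInf_le (by simp)
  have h0 : mex {0} ∉ ({0} : Set ℕ) := Nat.sInf_mem (s := {n | n ∉ ({0} : Set ℕ)}) ⟨1, by simp⟩
  rw [Set.mem_singleton_iff] at h0
  omega

lemma mex_eq_zero_of_zero_notMem {s : Set ℕ} (h : 0 ∉ s) : mex s = 0 :=
  Nat.sInf_eq_zero.mpr (Or.inl h)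

lemma SG_cons (a : ℕ) (l : List ℕ) :
    SG (a :: l) = mex {SG (leftCol (a :: l)), SG (topRow (a :: l))} := by
  rw [SG, dif_neg (List.cons_ne_nil a l)]

-- Both moves from `sₙ₊₁` lead to `sₙ`.
lemma SG_staircase_succ (n : ℕ) : SG (staircase (n + 1)) = mex {SG (staircase n)} := by
  rw [staircase_succ, SG_cons, ← staircase_succ, leftCol_staircase_succ,
    topRow_staircase_succ, Set.pair_eq_singleton]

lemma SG_staircase_eq_mod_two (n : ℕ) : SG (staircase n) = n % 2 := by
  induction n with
  | zero => simp [staircase, SG]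
  | succ m ih =>
    rw [SG_staircase_succ, ih]
    rcases Nat.mod_two_eq_zero_or_one m with h | h
    · rw [h, mex_singleton_zero]; omega
    · rw [mex_eq_zero_of_zero_notMem (by simp [h])]; omega

theorem SG_staircase_general (n : ℕ) :
    (Odd n → SG (staircase n) = 1) ∧ (Even n → SG (staircase n) = 0) := by
  rw [SG_staircase_eq_mod_two, Nat.odd_iff, Nat.even_iff]
  exact ⟨id, id⟩

/-- The staircase partition `sₙ = (n, n-1, …, 2, 1)` has Sprague–Grundy value
1 if `n` is odd and 0 if `n` is even. -/
theorem SG_staircase (n : ℕ) (hn : 0 < n) :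
    (Odd n → SG (staircase n) = 1) ∧ (Even n → SG (staircase n) = 0) :=
  SG_staircase_general n
end

section
/- Let n, m, r, s be positive integers with m > r and n > r, and consider the thick Γ-partition (nᵐ, rˢ) with m parts equal to n followed by s parts equal to r. If n = r + 1, or n = r + 2, or n > r + 2 with n − r even, then SG((nᵐ, rˢ)) = 0 if r + m is even and SG((nᵐ, rˢ)) = 1 if r + m is odd. If n > r + 2 and n − r is odd, then SG((nᵐ, rˢ)) = 1 if m = r + 1; SG((nᵐ, rˢ)) = 2 if m = r + 2; SG((nᵐ, rˢ)) = 0 if m − r is odd and m − r ≥ 3; and SG((nᵐ, rˢ)) = 1 if m − r is even and m − r ≥ 4. -/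
lemma mex_eq_of_forall_lt_mem {S : Set ℕ} {c : ℕ} (hc : c ∉ S) (h : ∀ j < c, j ∈ S) :
    mex S = c :=
  le_antisymm (Nat.sInf_le hc) (le_csInf ⟨c, hc⟩ fun _ hj => not_lt.1 fun hjc => hj (h _ hjc))

lemma mex_pair_eq {a b c : ℕ} (hc : c ≤ 2) (ha : c ≠ a) (hb : c ≠ b)
    (h0 : 0 < c → a = 0 ∨ b = 0) (h1 : 1 < c → a = 1 ∨ b = 1) : mex {a, b} = c := by
  refine mex_eq_of_forall_lt_mem (by simp [ha, hb]) fun j hj => ?_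
  simp only [Set.mem_insert_iff, Set.mem_singleton_iff]
  omega

lemma SG_eq_mex {l : List ℕ} (hl : l ≠ []) : SG l = mex {SG (leftCol l), SG (topRow l)} := by
  rw [SG, dif_neg hl]

def IsMexGrid (f : ℕ → ℕ → ℕ) : Prop :=
  ∀ i j, f (i + 1) (j + 1) = mex {f i (j + 1), f (i + 1) j}

lemma IsMexGrid.eq_of_axes {f g : ℕ → ℕ → ℕ} (hf : IsMexGrid f) (hg : IsMexGrid g)
    (h0 : ∀ j, f 0 j = g 0 j) (h0' : ∀ i, f i 0 = g i 0) (i j : ℕ) : f i j = g i j := by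
  induction i generalizing j with
  | zero => exact h0 j
  | succ i ihi =>
    induction j with
    | zero => exact h0' _
    | succ j ihj => rw [hf, hg, ihi, ihj]

lemma isMexGrid_SG {shape : ℕ → ℕ → List ℕ}
    (hL : ∀ i j, leftCol (shape (i + 1) j) = shape i j)
    (hT : ∀ i j, topRow (shape i (j + 1)) = shape i j)
    (hne : ∀ i j, shape (i + 1) (j + 1) ≠ []) : IsMexGrid fun i j => SG (shape i j) := by
  intro i j
  dsimp only
  rw [SG_eq_mex (hne i j), hL, hT]

lemma leftCol_append (l₁ l₂ : List ℕ) :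
    leftCol (l₁ ++ l₂) = leftCol l₁ ++ leftCol l₂ := by
  simp [leftCol, List.filter_append]

def rectangle (n m : ℕ) : List ℕ := if n = 0 then [] else List.replicate m n

@[simp] lemma rectangle_zero_left (m : ℕ) : rectangle 0 m = [] := rfl

@[simp] lemma rectangle_zero_right (n : ℕ) : rectangle n 0 = [] := by
  simp [rectangle]

lemma leftCol_rectangle (n m : ℕ) : leftCol (rectangle (n + 1) m) = rectangle n m := by
  rcases n with _ | n <;> simp [rectangle, leftCol, List.map_replicate]

lemma topRow_rectangle (n m : ℕ) : topRow (rectangle n (m + 1)) = rectangle n m := by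
  by_cases hn : n = 0 <;> simp [rectangle, hn, topRow]

lemma topRow_rectangle_append {n : ℕ} (hn : n ≠ 0) (m : ℕ) (l : List ℕ) :
    topRow (rectangle n (m + 1) ++ l) = rectangle n m ++ l := by
  simp [rectangle, hn, topRow, List.replicate_succ]

lemma rectangle_succ_ne_nil (n m : ℕ) : rectangle (n + 1) (m + 1) ≠ [] := by
  simp [rectangle]

/-- The partition `((r + d)ᵐ, rˢ)`, with the parts equal to `0` omitted. -/
def gamma (d s r m : ℕ) : List ℕ := rectangle (r + d) m ++ rectangle r s

lemma leftCol_gamma (d s r m : ℕ) : leftCol (gamma d s (r + 1) m) = gamma d s r m := by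
  rw [gamma, leftCol_append, Nat.add_right_comm, leftCol_rectangle, leftCol_rectangle, gamma]

lemma topRow_gamma {d : ℕ} (hd : d ≠ 0) (s r m : ℕ) :
    topRow (gamma d s r (m + 1)) = gamma d s r m :=
  topRow_rectangle_append (by omega) m _

lemma gamma_ne_nil (d s r m : ℕ) : gamma d s (r + 1) (m + 1) ≠ [] := by
  simp [gamma, Nat.add_right_comm r 1 d, rectangle]

def rectangleValue (n m : ℕ) : ℕ :=
  if n = 0 ∨ m = 0 then 0
  else if n = 1 then 2 - m % 2
  else if m = 1 then 2 - n % 2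
  else if n = 2 ∨ m = 2 then 2 * ((n + m) % 2)
  else (n + m) % 2

lemma rectangleValue_ne_zero {n m : ℕ} (hn : n ≠ 0) (hm : m ≠ 0) (h : n = 1 ∨ m = 1) :
    rectangleValue n m ≠ 0 := by
  unfold rectangleValue
  split_ifs <;> omega

lemma isMexGrid_rectangleValue : IsMexGrid rectangleValue := by
  intro n m
  rcases n with _ | _ | _ | n <;> rcases m with _ | _ | _ | m <;>
    refine (mex_pair_eq ?_ ?_ ?_ ?_ ?_).symm <;> simp [rectangleValue] <;> omega

theorem SG_rectangle (n m : ℕ) : SG (rectangle n m) = rectangleValue n m :=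
  (isMexGrid_SG leftCol_rectangle topRow_rectangle rectangle_succ_ne_nil).eq_of_axes
    isMexGrid_rectangleValue (fun _ => by simp [SG_nil, rectangleValue])
    (fun _ => by simp [SG_nil, rectangleValue]) n m

def gammaInteriorValue (upper lower : Bool) (r m : ℕ) : ℕ :=
  if (upper ∧ m = r + 2) ∨ (lower ∧ r = m + 2) then 2
  else if (upper ∧ r + 2 < m) ∨ (lower ∧ m + 2 < r) then (r + m + 1) % 2
  else (r + m) % 2

lemma gammaInteriorValue_step (upper lower : Bool) (r m : ℕ) :
    gammaInteriorValue upper lower (r + 2) (m + 2) =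
      mex {gammaInteriorValue upper lower (r + 1) (m + 2),
        gammaInteriorValue upper lower (r + 2) (m + 1)} := by
  obtain ⟨k, rfl⟩ | ⟨k, rfl⟩ :=
    (le_total r m).imp Nat.exists_eq_add_of_le Nat.exists_eq_add_of_le
  · cases upper <;> rcases k with _ | _ | _ | _ | k <;>
      refine (mex_pair_eq ?_ ?_ ?_ ?_ ?_).symm <;> simp +arith [gammaInteriorValue] <;> omega
  · cases lower <;> rcases k with _ | _ | _ | _ | k <;>
      refine (mex_pair_eq ?_ ?_ ?_ ?_ ?_).symm <;> simp +arith [gammaInteriorValue] <;> omega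

lemma gammaInteriorValue_one_succ_succ {d : ℕ} (hd : 0 < d) (lower : Bool) (m : ℕ) :
    gammaInteriorValue (d % 2 = 1 ∧ 3 ≤ d) lower 1 (m + 2) =
      mex {rectangleValue d (m + 2),
        gammaInteriorValue (d % 2 = 1 ∧ 3 ≤ d) lower 1 (m + 1)} := by
  obtain ⟨k, rfl | rfl⟩ := Nat.even_or_odd' d <;> rcases k with _ | _ | k <;>
    rcases m with _ | _ | _ | m <;>
    refine (mex_pair_eq ?_ ?_ ?_ ?_ ?_).symm <;>
    simp +arith [gammaInteriorValue, rectangleValue] <;> omega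

lemma gammaInteriorValue_succ_succ_one {s : ℕ} (hs : 0 < s) (upper : Bool) (r : ℕ) :
    gammaInteriorValue upper (s % 2 = 1 ∧ 3 ≤ s) (r + 2) 1 =
      mex {gammaInteriorValue upper (s % 2 = 1 ∧ 3 ≤ s) (r + 1) 1,
        rectangleValue (r + 2) s} := by
  obtain ⟨k, rfl | rfl⟩ := Nat.even_or_odd' s <;> rcases k with _ | _ | k <;>
    rcases r with _ | _ | _ | r <;>
    refine (mex_pair_eq ?_ ?_ ?_ ?_ ?_).symm <;>
    simp +arith [gammaInteriorValue, rectangleValue] <;> omega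

def gammaValue (d s r m : ℕ) : ℕ :=
  if r = 0 then rectangleValue d m
  else if m = 0 then rectangleValue r s
  else gammaInteriorValue (d % 2 = 1 ∧ 3 ≤ d) (s % 2 = 1 ∧ 3 ≤ s) r m

lemma isMexGrid_gammaValue {d s : ℕ} (hd : 0 < d) (hs : 0 < s) : IsMexGrid (gammaValue d s) := by
  intro r m
  rcases r with _ | r <;> rcases m with _ | m
  · simp only [gammaValue, zero_add, one_ne_zero, ↓reduceIte]
    rw [mex_pair_eq zero_le_two (rectangleValue_ne_zero hd.ne' one_ne_zero (.inr rfl)).symm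
      (rectangleValue_ne_zero one_ne_zero hs.ne' (.inl rfl)).symm (by omega) (by omega)]
    simp [gammaInteriorValue]
  · simpa [gammaValue] using gammaInteriorValue_one_succ_succ hd _ m
  · simpa [gammaValue] using gammaInteriorValue_succ_succ_one hs _ r
  · simpa [gammaValue] using gammaInteriorValue_step _ _ r m

theorem SG_gamma {d s : ℕ} (hd : 0 < d) (hs : 0 < s) (r m : ℕ) :
    SG (gamma d s r m) = gammaValue d s r m :=
  (isMexGrid_SG (leftCol_gamma d s) (topRow_gamma hd.ne' s) (gamma_ne_nil d s)).eq_of_axes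
    (isMexGrid_gammaValue hd hs) (fun _ => by simp [gamma, gammaValue, SG_rectangle])
    (fun r => by cases r <;> simp [gamma, gammaValue, SG_rectangle, SG_nil, rectangleValue]) r m

theorem SG_thick_gamma_general (n m r s : ℕ)
    (hr : 0 < r) (hs : 0 < s) (hm : r < m) (hn : r < n) :
    ((n = r + 1 ∨ n = r + 2 ∨ (r + 2 < n ∧ Even (n - r))) →
      (Even (r + m) → SG (List.replicate m n ++ List.replicate s r) = 0) ∧
      (Odd (r + m) → SG (List.replicate m n ++ List.replicate s r) = 1)) ∧
    ((r + 2 < n ∧ Odd (n - r)) →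
      (m = r + 1 → SG (List.replicate m n ++ List.replicate s r) = 1) ∧
      (m = r + 2 → SG (List.replicate m n ++ List.replicate s r) = 2) ∧
      (Odd (m - r) ∧ 3 ≤ m - r → SG (List.replicate m n ++ List.replicate s r) = 0) ∧
      (Even (m - r) ∧ 4 ≤ m - r → SG (List.replicate m n ++ List.replicate s r) = 1)) := by
  have hshape : List.replicate m n ++ List.replicate s r = gamma (n - r) s r m := by
    simp [gamma, rectangle, hr.ne', show r + (n - r) = n by omega, show n ≠ 0 by omega]
  have hvalue : SG (List.replicate m n ++ List.replicate s r) =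
      gammaInteriorValue ((n - r) % 2 = 1 ∧ 3 ≤ n - r) (s % 2 = 1 ∧ 3 ≤ s) r m := by
    rw [hshape, SG_gamma (by omega) hs, gammaValue, if_neg hr.ne', if_neg (by omega)]
  simp only [hvalue, gammaInteriorValue, Nat.even_iff, Nat.odd_iff]
  refine ⟨fun hd => ⟨fun h => ?_, fun h => ?_⟩,
    fun hd => ⟨fun h => ?_, fun h => ?_, fun h => ?_, fun h => ?_⟩⟩ <;>
    split_ifs <;> simp only [decide_eq_true_eq] at * <;> omega

/-- Sprague–Grundy values of all thick Γ-partitions `(nᵐ, rˢ)` with `m > r`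
and `n > r`. -/
theorem SG_thick_gamma (n m r s : ℕ) (hn0 : 0 < n) (hm0 : 0 < m)
    (hr : 0 < r) (hs : 0 < s) (hm : r < m) (hn : r < n) :
    ((n = r + 1 ∨ n = r + 2 ∨ (r + 2 < n ∧ Even (n - r))) →
      (Even (r + m) → SG (List.replicate m n ++ List.replicate s r) = 0) ∧
      (Odd (r + m) → SG (List.replicate m n ++ List.replicate s r) = 1)) ∧
    ((r + 2 < n ∧ Odd (n - r)) →
      (m = r + 1 → SG (List.replicate m n ++ List.replicate s r) = 1) ∧
      (m = r + 2 → SG (List.replicate m n ++ List.replicate s r) = 2) ∧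
      (Odd (m - r) ∧ 3 ≤ m - r → SG (List.replicate m n ++ List.replicate s r) = 0) ∧
      (Even (m - r) ∧ 4 ≤ m - r → SG (List.replicate m n ++ List.replicate s r) = 1)) :=
  SG_thick_gamma_general n m r s hr hs hm hn
end
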